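/- In the RP chain with p = 0, suppose the configuration S has exactly one defector-run (a maximal set of cyclically consecutive vertices in state false), of length k with 1 ≤ k ≤ n−1. Then after one step of the chain the configuration again has exactly one defector-run; its length is k+1 with probability 2/n and k with probability 1 − 2/n. -/

import Mathlib

open scoped Classical

/-- A configuration of the `n`-cycle: `true` = cooperate, `false` = defect. -/
abbrev Config (n : ℕ) := ZMod n → Bool

/-- Probability that, when the edge `{i, i+1}` is selected for play, the
Rational Pavlov update turns configuration `S` into configuration `T`. -/
noncomputable def rpUpdProb (p : ℝ) {n : ℕ} (S : Config n) (i : ZMod n) (T : Config n) : ℝ :=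
  if S i = true ∧ S (i + 1) = true then
    (if T = S then 1 else 0)
  else if S i = false ∧ S (i + 1) = false then
    (if ∀ j : ZMod n, j ≠ i → j ≠ i + 1 → T j = S j then
      (if T i = true then p else 1 - p) * (if T (i + 1) = true then p else 1 - p)
    else 0)
  else
    (if T = Function.update (Function.update S i false) (i + 1) false then 1 else 0)

/-- One-step transition probability of the Rational Pavlov chain on the `n`-cycle:
an edge `{i, i+1}` is chosen uniformly at random and the two players update. -/
noncomputable def rpStepProb (p : ℝ) {n : ℕ} [NeZero n] (S T : Config n) : ℝ :=
  (1 / (n : ℝ)) * ∑ i : ZMod n, rpUpdProb p S i T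

/-- Probability that the Rational Pavlov chain started at `S0`, run for `t` steps,
produces a trajectory `σ : Fin (t+1) → Config n` satisfying the event `E`. -/
noncomputable def rpTrajProb (p : ℝ) {n : ℕ} [NeZero n] (S0 : Config n) (t : ℕ)
    (E : (Fin (t + 1) → Config n) → Prop) : ℝ :=
  ∑ σ : Fin (t + 1) → Config n,
    (if σ 0 = S0 ∧ E σ then ∏ s : Fin t, rpStepProb p (σ s.castSucc) (σ s.succ) else 0)

/-- `S` has exactly one defector-run, of length `k`: for some starting vertex `i`,
the vertices `i, i+1, …, i+k-1` are in state `false` and all other vertices are `true`. -/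
def hasExactlyOneDefectorRun {n : ℕ} (S : Config n) (k : ℕ) : Prop :=
  ∃ i : ZMod n, ∀ m : ℕ, m < n → (S (i + (m : ZMod n)) = false ↔ m < k)

/-!
With `p = 0` every update is deterministic: an edge whose endpoints agree leaves the
configuration unchanged, and an edge with exactly one defector turns both endpoints into
defectors. A single run of `k` defectors (`0 < k < n`) has exactly two such mixed edges, one at
each end, and playing either of them lengthens the run by one, while the other `n - 2` edges
fix the configuration. Runs of different lengths are told apart by counting defectors.
-/

open Finset Function

section PavlovZero

variable {n : ℕ}

/-- For `p = 0` the update of the edge `{i, i+1}` is deterministic. -/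
def pavlovZeroMove (S : Config n) (i : ZMod n) : Config n :=
  if S i = true ∧ S (i + 1) = true then S else update (update S i false) (i + 1) false

lemma pavlovZeroMove_of_eq_false {S : Config n} {i : ZMod n} (h : S i = false) :
    pavlovZeroMove S i = update S (i + 1) false := by
  rw [pavlovZeroMove, if_neg (by simp [h]),
    show update S i false = S from update_eq_self_iff.2 h.symm]

lemma pavlovZeroMove_eq_self {S : Config n} {i : ZMod n} (h : S i = S (i + 1)) :
    pavlovZeroMove S i = S := by
  cases hi : S i
  · rw [pavlovZeroMove_of_eq_false hi, update_eq_self_iff.2 (hi ▸ h)]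
  · rw [pavlovZeroMove, if_pos ⟨hi, hi ▸ h.symm⟩]

lemma pavlovZeroMove_of_succ_eq_false {S : Config n} {i : ZMod n} (h : S (i + 1) = false) :
    pavlovZeroMove S i = update S i false := by
  rw [pavlovZeroMove, if_neg (by simp [h]), update_eq_self_iff]
  by_cases hi : i + 1 = i <;> simp [hi, h]

lemma rpUpdProb_zero (S : Config n) (i : ZMod n) (T : Config n) :
    rpUpdProb 0 S i T = if T = pavlovZeroMove S i then 1 else 0 := by
  by_cases hpair : S i = S (i + 1)
  · rw [pavlovZeroMove_eq_self hpair]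
    cases hi : S i
    · have hi1 : S (i + 1) = false := hpair ▸ hi
      have hT : T = S ↔
          (∀ j, j ≠ i → j ≠ i + 1 → T j = S j) ∧ T i = false ∧ T (i + 1) = false := by
        refine ⟨by rintro rfl; exact ⟨fun _ _ _ => rfl, hi, hi1⟩, ?_⟩
        rintro ⟨hj, hTi, hTi1⟩
        funext j
        by_cases hji : j = i
        · rw [hji, hTi, hi]
        by_cases hji1 : j = i + 1
        · rw [hji1, hTi1, hi1]
        exact hj j hji hji1
      simp only [rpUpdProb, hi, hi1, hT]
      by_cases hj : ∀ j, j ≠ i → j ≠ i + 1 → T j = S j <;>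
        cases T i <;> cases T (i + 1) <;> simp [hj]
    · simp [rpUpdProb, hi, ← hpair]
  · have hne : ¬(S i = true ∧ S (i + 1) = true) ∧ ¬(S i = false ∧ S (i + 1) = false) :=
      ⟨fun h => hpair (h.1.trans h.2.symm), fun h => hpair (h.1.trans h.2.symm)⟩
    rw [rpUpdProb, pavlovZeroMove, if_neg hne.1, if_neg hne.1, if_neg hne.2]

variable [NeZero n]

lemma rpStepProb_zero (S T : Config n) :
    rpStepProb 0 S T = #{i | pavlovZeroMove S i = T} / n := by
  simp_rw [rpStepProb, rpUpdProb_zero, eq_comm (a := T), Finset.sum_boole, one_div,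
    div_eq_inv_mul]

lemma exists_pavlovZeroMove_eq_of_rpStepProb_zero_ne_zero {S T : Config n}
    (h : rpStepProb 0 S T ≠ 0) : ∃ i, pavlovZeroMove S i = T := by
  by_contra! hT
  simp [rpStepProb_zero, hT] at h

lemma sum_ite_rpStepProb_zero (S : Config n) (P : Config n → Prop) :
    ∑ T, (if P T then rpStepProb 0 S T else 0) = #{i | P (pavlovZeroMove S i)} / n := by
  simp only [rpStepProb_zero, ← Finset.sum_filter, ← Finset.sum_div]
  have := sum_card_fiberwise_eq_card_filter univ {T | P T} (pavlovZeroMove S)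
  simp only [mem_filter, mem_univ, true_and] at this
  rw [← this, Nat.cast_sum]

end PavlovZero

lemma ZMod.natCast_inj_of_lt {n m m' : ℕ} (hm : m < n) (hm' : m' < n)
    (h : (m : ZMod n) = m') : m = m' := by
  simpa [ZMod.val_natCast_of_lt hm, ZMod.val_natCast_of_lt hm'] using congrArg ZMod.val h

lemma ZMod.exists_eq_add_natCast {n : ℕ} [NeZero n] (a j : ZMod n) : ∃ m < n, j = a + m :=
  ⟨(j - a).val, ZMod.val_lt _, by rw [ZMod.natCast_zmod_val]; ring⟩

section DefectorRun

variable {n : ℕ}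

def IsDefectorRunFrom (S : Config n) (a : ZMod n) (k : ℕ) : Prop :=
  ∀ m < n, S (a + m) = false ↔ m < k

/-- The two edges `{a-1, a}` and `{a+k-1, a+k}` at the ends of the run `a, …, a+k-1`. -/
def runBoundary (a : ZMod n) (k : ℕ) : Finset (ZMod n) :=
  {a - 1, a + ((k - 1 : ℕ) : ZMod n)}

variable {S : Config n} {a : ZMod n} {k : ℕ}

lemma IsDefectorRunFrom.pavlovZeroMove_add (ha : IsDefectorRunFrom S a k) (hk1 : 1 ≤ k)
    (hk : k < n) :
    hasExactlyOneDefectorRun (pavlovZeroMove S (a + ((k - 1 : ℕ) : ZMod n))) (k + 1) := by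
  rw [pavlovZeroMove_of_eq_false ((ha (k - 1) (by omega)).2 (by omega)),
    show a + ((k - 1 : ℕ) : ZMod n) + 1 = a + k by push_cast [Nat.cast_sub hk1]; ring]
  refine ⟨a, fun m hm => ?_⟩
  by_cases hmk : m = k
  · simp [hmk]
  · rw [update_apply, if_neg fun h => hmk (ZMod.natCast_inj_of_lt hm hk (add_left_cancel h)),
      ha m hm]
    omega

variable [NeZero n]

lemma hasExactlyOneDefectorRun.card_filter_eq_false (h : hasExactlyOneDefectorRun S k)
    (hk : k ≤ n) : #{j | S j = false} = k := by
  obtain ⟨a, ha⟩ := h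
  have himage : ({j | S j = false} : Finset (ZMod n)) =
      (range k).image fun m : ℕ => a + (m : ZMod n) := by
    ext j
    obtain ⟨m, hm, rfl⟩ := ZMod.exists_eq_add_natCast a j
    simp only [mem_filter, mem_univ, true_and, mem_image, mem_range, ha m hm]
    refine ⟨fun hmk => ⟨m, hmk, rfl⟩, ?_⟩
    rintro ⟨m', hm', h⟩
    have := ZMod.natCast_inj_of_lt (hm'.trans_le hk) hm (add_left_cancel h)
    omega
  rw [himage, card_image_of_injOn, card_range]
  intro x hx y hy h
  exact ZMod.natCast_inj_of_lt ((mem_range.1 hx).trans_le hk) ((mem_range.1 hy).trans_le hk)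
    (add_left_cancel h)

lemma hasExactlyOneDefectorRun.unique {l : ℕ} (h : hasExactlyOneDefectorRun S k)
    (h' : hasExactlyOneDefectorRun S l) (hk : k ≤ n) (hl : l ≤ n) : k = l :=
  (h.card_filter_eq_false hk).symm.trans (h'.card_filter_eq_false hl)

lemma card_runBoundary (a : ZMod n) (hk1 : 1 ≤ k) (hk : k < n) : #(runBoundary a k) = 2 := by
  refine card_pair fun h => ?_
  have hk0 : ((k : ℕ) : ZMod n) = ((0 : ℕ) : ZMod n) := by
    have := congrArg (· + 1) h
    simp only [sub_add_cancel, Nat.cast_sub hk1, Nat.cast_one] at this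
    push_cast
    linear_combination -this
  have := ZMod.natCast_inj_of_lt hk (NeZero.pos n) hk0
  omega

namespace IsDefectorRunFrom

lemma pavlovZeroMove_sub_one (ha : IsDefectorRunFrom S a k) (hk1 : 1 ≤ k) :
    hasExactlyOneDefectorRun (pavlovZeroMove S (a - 1)) (k + 1) := by
  have hSa : S (a - 1 + 1) = false := by simpa using (ha 0 (NeZero.pos n)).2 hk1
  rw [pavlovZeroMove_of_succ_eq_false hSa]
  refine ⟨a - 1, fun m hm => ?_⟩
  cases m with
  | zero => simp
  | succ m =>
    have hm0 : a - 1 + ((m + 1 : ℕ) : ZMod n) ≠ a - 1 := fun h =>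
      m.succ_ne_zero <| ZMod.natCast_inj_of_lt hm (NeZero.pos n) <| by
        rw [Nat.cast_zero]; exact add_eq_left.1 h
    rw [update_apply, if_neg hm0, Nat.cast_succ, show a - 1 + ((m : ZMod n) + 1) = a + m by ring,
      ha m (by omega)]
    omega

lemma apply_eq_apply_add_one (ha : IsDefectorRunFrom S a k) {i : ZMod n} (hi₁ : i ≠ a - 1)
    (hi₂ : i ≠ a + ((k - 1 : ℕ) : ZMod n)) : S i = S (i + 1) := by
  obtain ⟨m, hm, rfl⟩ := ZMod.exists_eq_add_natCast a i
  have hm₁ : m + 1 < n := by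
    by_contra!
    refine hi₁ (by rw [show m = (n - 1 : ℕ) by omega, Nat.cast_sub (NeZero.pos n)]; simp; ring)
  have hmk : m ≠ k - 1 := by rintro rfl; exact hi₂ rfl
  have hsucc := ha (m + 1) hm₁
  rw [Nat.cast_succ, ← add_assoc] at hsucc
  have := ha m hm
  cases h₀ : S (a + m) <;> cases h₁ : S (a + m + 1) <;> simp_all <;> omega

lemma pavlovZeroMove_eq_self_of_notMem (ha : IsDefectorRunFrom S a k) {i : ZMod n}
    (hi : i ∉ runBoundary a k) : pavlovZeroMove S i = S := by
  simp only [runBoundary, mem_insert, mem_singleton, not_or] at hi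
  exact pavlovZeroMove_eq_self (ha.apply_eq_apply_add_one hi.1 hi.2)

lemma hasExactlyOneDefectorRun_pavlovZeroMove_of_mem (ha : IsDefectorRunFrom S a k)
    (hk1 : 1 ≤ k) (hk : k < n) {i : ZMod n} (hi : i ∈ runBoundary a k) :
    hasExactlyOneDefectorRun (pavlovZeroMove S i) (k + 1) := by
  simp only [runBoundary, mem_insert, mem_singleton] at hi
  rcases hi with rfl | rfl
  exacts [ha.pavlovZeroMove_sub_one hk1, ha.pavlovZeroMove_add hk1 hk]

lemma filter_pavlovZeroMove_succ (ha : IsDefectorRunFrom S a k) (hk1 : 1 ≤ k) (hk : k < n) :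
    ({i | hasExactlyOneDefectorRun (pavlovZeroMove S i) (k + 1)} : Finset _) =
      runBoundary a k := by
  ext i
  by_cases hi : i ∈ runBoundary a k
  · simp [hi, ha.hasExactlyOneDefectorRun_pavlovZeroMove_of_mem hk1 hk hi]
  · simp only [mem_filter, mem_univ, true_and, hi, iff_false,
      ha.pavlovZeroMove_eq_self_of_notMem hi]
    exact fun h => by have := hasExactlyOneDefectorRun.unique ⟨a, ha⟩ h hk.le hk; omega

lemma filter_pavlovZeroMove (ha : IsDefectorRunFrom S a k) (hk1 : 1 ≤ k) (hk : k < n) :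
    ({i | hasExactlyOneDefectorRun (pavlovZeroMove S i) k} : Finset _) = (runBoundary a k)ᶜ := by
  ext i
  by_cases hi : i ∈ runBoundary a k
  · simp only [mem_filter, mem_univ, true_and, mem_compl, hi, not_true, iff_false]
    exact fun h => by
      have := (ha.hasExactlyOneDefectorRun_pavlovZeroMove_of_mem hk1 hk hi).unique h hk hk.le
      omega
  · simpa [hi, ha.pavlovZeroMove_eq_self_of_notMem hi] using ⟨a, ha⟩

end IsDefectorRunFrom

end DefectorRun

theorem rp_one_run_step_general (n : ℕ) [NeZero n] (S : Config n) (k : ℕ)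
    (hk1 : 1 ≤ k) (hk2 : k ≤ n - 1) (hS : hasExactlyOneDefectorRun S k) :
    (∀ S' : Config n, rpStepProb 0 S S' ≠ 0 →
        hasExactlyOneDefectorRun S' k ∨ hasExactlyOneDefectorRun S' (k + 1)) ∧
      (∑ S' : Config n,
          if hasExactlyOneDefectorRun S' (k + 1) then rpStepProb 0 S S' else 0) = 2 / n ∧
      (∑ S' : Config n,
          if hasExactlyOneDefectorRun S' k then rpStepProb 0 S S' else 0) = 1 - 2 / n := by
  obtain ⟨a, ha⟩ : ∃ a, IsDefectorRunFrom S a k := hS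
  have hkn : k < n := by omega
  refine ⟨fun S' hS' => ?_, ?_, ?_⟩
  · obtain ⟨i, rfl⟩ := exists_pavlovZeroMove_eq_of_rpStepProb_zero_ne_zero hS'
    by_cases hi : i ∈ runBoundary a k
    · exact .inr (ha.hasExactlyOneDefectorRun_pavlovZeroMove_of_mem hk1 hkn hi)
    · exact .inl (by rw [ha.pavlovZeroMove_eq_self_of_notMem hi]; exact ⟨a, ha⟩)
  · rw [sum_ite_rpStepProb_zero, ha.filter_pavlovZeroMove_succ hk1 hkn, card_runBoundary a hk1 hkn,
      Nat.cast_two]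
  · rw [sum_ite_rpStepProb_zero, ha.filter_pavlovZeroMove hk1 hkn, card_compl,
      card_runBoundary a hk1 hkn, ZMod.card, Nat.cast_sub (by omega), Nat.cast_two, sub_div,
      div_self (Nat.cast_ne_zero.2 (NeZero.ne n))]

/-- **One step of the `p = 0` chain from a single defector-run.**
If `S` has exactly one defector-run, of length `k` with `1 ≤ k ≤ n-1`, then after one step
the configuration again has exactly one defector-run; its length is `k+1` with probability
`2/n` and `k` with probability `1 - 2/n`. -/
theorem rp_one_run_step (n : ℕ) [NeZero n] (hn : 3 ≤ n) (S : Config n) (k : ℕ)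
    (hk1 : 1 ≤ k) (hk2 : k ≤ n - 1) (hS : hasExactlyOneDefectorRun S k) :
    (∀ S' : Config n, rpStepProb 0 S S' ≠ 0 →
        hasExactlyOneDefectorRun S' k ∨ hasExactlyOneDefectorRun S' (k + 1)) ∧
      (∑ S' : Config n,
          if hasExactlyOneDefectorRun S' (k + 1) then rpStepProb 0 S S' else 0) = 2 / n ∧
      (∑ S' : Config n,
          if hasExactlyOneDefectorRun S' k then rpStepProb 0 S S' else 0) = 1 - 2 / n :=
  rp_one_run_step_general n S k hk1 hk2 hS
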